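/- Let Ω ⊂ ℝ^N be a bounded C² domain, ε > 0, and L^ε = −Δ − μ/(δ²+ε²) with Dirichlet boundary conditions, μ > 1/4. Let φ₀^ε be a first L²-normalized eigenfunction with eigenvalue λ₀^ε, and assume λ₀^ε → −∞ as ε → 0⁺. Then for every β > 0, ∫_{Ω∖Ω_β} (φ₀^ε)² dx → 0 as ε → 0⁺, where Ω_β = {x ∈ Ω : δ(x) < β}. -/

import Mathlib

open MeasureTheory Metric Set Filter

/-- Laplacian of a scalar function on Euclidean space. -/
noncomputable def lap {N : ℕ} (f : EuclideanSpace ℝ (Fin N) → ℝ)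
    (x : EuclideanSpace ℝ (Fin N)) : ℝ :=
  ∑ i : Fin N, fderiv ℝ (fun y => fderiv ℝ f y (EuclideanSpace.single i 1)) x
    (EuclideanSpace.single i 1)

open Manifold in
lemma smooth_urysohn {N : ℕ} {s t : Set (EuclideanSpace ℝ (Fin N))}
    (hs : IsClosed s) (ht : IsClosed t) (hd : Disjoint s t) :
    ∃ ξ : EuclideanSpace ℝ (Fin N) → ℝ, ContDiff ℝ (⊤:ℕ∞) ξ ∧ EqOn ξ 0 s ∧ EqOn ξ 1 t ∧
      ∀ x, ξ x ∈ Icc (0:ℝ) 1 := by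
  obtain ⟨f, h0, h1, h01⟩ := exists_contMDiffMap_zero_one_of_isClosed (n := (⊤:ℕ∞))
    (𝓘(ℝ, EuclideanSpace ℝ (Fin N))) hs ht hd
  exact ⟨f, f.contMDiff.contDiff, h0, h1, h01⟩

lemma ibp_core {N : ℕ} (Φ ξ W : EuclideanSpace ℝ (Fin N) → ℝ)
    (hΦ : ContDiff ℝ (⊤:ℕ∞) Φ) (hΦc : HasCompactSupport Φ)
    (hξ : ContDiff ℝ (⊤:ℕ∞) ξ)
    (heq : ∀ x, (ξ x)^2 * Φ x * (-(lap Φ x)) = W x * ((ξ x)^2 * (Φ x)^2)) :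
    -(∫ x, (Φ x)^2 * ∑ i, (fderiv ℝ ξ x (EuclideanSpace.single i 1))^2)
      ≤ ∫ x, W x * ((ξ x)^2 * (Φ x)^2) := by
  classical
  let e : Fin N → EuclideanSpace ℝ (Fin N) := fun i => EuclideanSpace.single i 1
  let a : Fin N → EuclideanSpace ℝ (Fin N) → ℝ := fun i x => fderiv ℝ Φ x (e i)
  let b : Fin N → EuclideanSpace ℝ (Fin N) → ℝ := fun i x => fderiv ℝ ξ x (e i)
  have hΦ1 : ContDiff ℝ 1 Φ := hΦ.of_le (by exact_mod_cast le_top)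
  have hξ1 : ContDiff ℝ 1 ξ := hξ.of_le (by exact_mod_cast le_top)
  have ha : ∀ i, ContDiff ℝ (⊤:ℕ∞) (a i) := by
    intro i
    exact (hΦ.fderiv_right (m := (⊤:ℕ∞)) (by simp)).clm_apply contDiff_const
  have hb : ∀ i, ContDiff ℝ (⊤:ℕ∞) (b i) := by
    intro i
    exact (hξ.fderiv_right (m := (⊤:ℕ∞)) (by simp)).clm_apply contDiff_const
  have hac : ∀ i, HasCompactSupport (a i) := fun i => hΦc.fderiv_apply (𝕜 := ℝ) (e i)
  -- integrability helper
  have intg : ∀ (g h : EuclideanSpace ℝ (Fin N) → ℝ), Continuous g → Continuous h →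
      HasCompactSupport h → Integrable (fun x => g x * h x) volume := by
    intro g h hg hh hhc
    exact (hg.mul hh).integrable_of_hasCompactSupport (hhc.mul_left)
  have hΦd : Differentiable ℝ Φ := hΦ1.differentiable one_ne_zero
  have hξd : Differentiable ℝ ξ := hξ1.differentiable one_ne_zero
  have haC : ∀ i, Continuous (a i) := fun i => (ha i).continuous
  have hbC : ∀ i, Continuous (b i) := fun i => (hb i).continuous
  set F : EuclideanSpace ℝ (Fin N) → ℝ := fun y => ξ y * ξ y * Φ y with hFdef
  have hF : ContDiff ℝ (⊤:ℕ∞) F := (hξ.mul hξ).mul hΦ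
  have hFd : Differentiable ℝ F := (hξd.mul hξd).mul hΦd
  have hFcont : Continuous F := hF.continuous
  have hF'C : ∀ (v : EuclideanSpace ℝ (Fin N)), Continuous (fun x => fderiv ℝ F x v) :=
    fun v => ((hF.fderiv_right (m := (⊤:ℕ∞)) (by simp)).clm_apply contDiff_const).continuous
  have haD : ∀ i, Differentiable ℝ (a i) :=
    fun i => (ha i).differentiable (by simp)
  have ha'C : ∀ i, Continuous (fun x => fderiv ℝ (a i) x (e i)) :=
    fun i => (((ha i).fderiv_right (m := (⊤:ℕ∞)) (by simp)).clm_apply contDiff_const).continuous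
  have hibp : ∀ i, ∫ x, F x * fderiv ℝ (a i) x (e i)
      = -∫ x, fderiv ℝ F x (e i) * a i x := by
    intro i
    refine integral_mul_fderiv_eq_neg_fderiv_mul_of_integrable ?_ ?_ ?_ (fun x _ => hFd x) (fun x _ => haD i x)
    · exact intg _ _ (hF'C (e i)) (haC i) (hac i)
    · exact intg _ _ hFcont (ha'C i) ((hac i).fderiv_apply (𝕜 := ℝ) (e i))
    · exact intg _ _ hFcont (haC i) (hac i)
  have hexp : ∀ i x, fderiv ℝ F x (e i)
      = ξ x * ξ x * a i x + Φ x * (2 * ξ x * b i x) := by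
    intro i x
    have h1 : HasFDerivAt ξ (fderiv ℝ ξ x) x := (hξd x).hasFDerivAt
    have h2 : HasFDerivAt Φ (fderiv ℝ Φ x) x := (hΦd x).hasFDerivAt
    have h3 := (h1.mul h1).mul h2
    rw [show F = ξ * ξ * Φ from rfl, h3.fderiv]
    simp only [ContinuousLinearMap.add_apply, ContinuousLinearMap.smul_apply, smul_eq_mul]
    show ξ x * ξ x * a i x + Φ x * (ξ x * b i x + ξ x * b i x)
        = ξ x * ξ x * a i x + Φ x * (2 * ξ x * b i x)
    ring
  -- the integrand on the right of the summed IBP identity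
  have step1 : ∫ x, W x * ((ξ x)^2 * (Φ x)^2)
      = ∫ x, ∑ i, (ξ x * ξ x * a i x + Φ x * (2 * ξ x * b i x)) * a i x := by
    have e1 : (fun x => W x * ((ξ x)^2 * (Φ x)^2))
        = fun x => -∑ i, F x * fderiv ℝ (a i) x (e i) := by
      funext x
      rw [← heq x]
      have : lap Φ x = ∑ i, fderiv ℝ (a i) x (e i) := rfl
      rw [this, mul_neg, neg_inj, Finset.mul_sum]
      refine Finset.sum_congr rfl fun i _ => ?_
      simp only [hFdef]
      ring
    rw [e1, integral_neg, integral_finset_sum _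
      (fun i _ => intg _ _ hFcont (ha'C i) ((hac i).fderiv_apply (𝕜 := ℝ) (e i)))]
    rw [show (∑ i, ∫ x, F x * fderiv ℝ (a i) x (e i))
        = ∑ i, -∫ x, fderiv ℝ F x (e i) * a i x from Finset.sum_congr rfl fun i _ => hibp i]
    rw [Finset.sum_neg_distrib, neg_neg,
      ← integral_finset_sum _ (fun i _ => intg _ _ (hF'C (e i)) (haC i) (hac i))]
    congr 1
    funext x
    exact Finset.sum_congr rfl fun i _ => by rw [hexp i x]
  rw [step1, ← integral_neg]
  have hΦ2c : HasCompactSupport (fun x => (Φ x)^2) :=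
    hΦc.comp_left (g := fun t : ℝ => t^2) (by norm_num)
  apply integral_mono
  · refine Integrable.neg ?_
    refine Continuous.integrable_of_hasCompactSupport ?_ ?_
    · exact (hΦ.continuous.pow 2).mul
        (continuous_finset_sum _ fun i _ => (hbC i).pow 2)
    · exact hΦ2c.mul_right
  · refine integrable_finset_sum _ fun i _ => intg _ _ ?_ (haC i) (hac i)
    exact ((hξ.continuous.mul hξ.continuous).mul (haC i)).add
      (hΦ.continuous.mul ((continuous_const.mul hξ.continuous).mul (hbC i)))
  · intro x
    show -((Φ x)^2 * ∑ i, (b i x)^2)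
        ≤ ∑ i, (ξ x * ξ x * a i x + Φ x * (2 * ξ x * b i x)) * a i x
    rw [Finset.mul_sum, ← Finset.sum_neg_distrib]
    refine Finset.sum_le_sum fun i _ => ?_
    nlinarith [sq_nonneg (ξ x * a i x + Φ x * b i x)]


/-- Concentration of the ground state at the boundary in the supercritical case:
if `μ > 1/4`, `φ₀^ε` are `L²`-normalized Dirichlet eigenfunctions of
`-Δ - μ/(δ²+ε²)` with eigenvalues `λ₀^ε → -∞` as `ε → 0⁺`, then for every `β > 0`
the mass of `φ₀^ε` in `Ω ∖ Ω_β` tends to `0`. -/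
theorem stmt15 {N : ℕ} (Ω : Set (EuclideanSpace ℝ (Fin N)))
    (hΩo : IsOpen Ω) (hΩb : Bornology.IsBounded Ω) (hΩn : Ω.Nonempty)
    (μ : ℝ) (hμ : 1 / 4 < μ)
    (φ : ℝ → EuclideanSpace ℝ (Fin N) → ℝ) (lam : ℝ → ℝ)
    (hsm : ∀ ε > (0 : ℝ), ContDiffOn ℝ (⊤ : ℕ∞) (φ ε) Ω)
    (hdir : ∀ ε > (0 : ℝ), ∀ x ∉ Ω, φ ε x = 0)
    (hnorm : ∀ ε > (0 : ℝ), ∫ x in Ω, (φ ε x) ^ 2 = 1)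
    (heig : ∀ ε > (0 : ℝ), ∀ x ∈ Ω,
      -(lap (φ ε) x) - μ / ((infDist x (frontier Ω)) ^ 2 + ε ^ 2) * φ ε x =
        lam ε * φ ε x)
    (hlam : Tendsto lam (nhdsWithin 0 (Set.Ioi 0)) atBot) :
    ∀ β > (0 : ℝ),
      Tendsto (fun ε => ∫ x in Ω \ {x ∈ Ω | infDist x (frontier Ω) < β}, (φ ε x) ^ 2)
        (nhdsWithin 0 (Set.Ioi 0)) (nhds 0) := by
  intro β hβ
  have hμ0 : (0:ℝ) < μ := lt_trans (by norm_num) hμ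
  set δ : EuclideanSpace ℝ (Fin N) → ℝ := fun x => infDist x (frontier Ω) with hδdef
  have hδc : Continuous δ := continuous_infDist_pt _
  -- cutoff functions
  obtain ⟨ξ, hξsm, hξ0, hξ1, hξI⟩ := smooth_urysohn (N := N)
    (s := {x | δ x ≤ β/2}) (t := {x | β ≤ δ x})
    (isClosed_le hδc continuous_const) (isClosed_le continuous_const hδc)
    (by
      rw [Set.disjoint_left]
      intro x hx1 hx2
      simp only [mem_setOf_eq] at hx1 hx2
      linarith)
  obtain ⟨η, hηsm, hη0, hη1, hηI⟩ := smooth_urysohn (N := N)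
    (s := {x | δ x ≤ β/4}) (t := {x | β/2 ≤ δ x})
    (isClosed_le hδc continuous_const) (isClosed_le continuous_const hδc)
    (by
      rw [Set.disjoint_left]
      intro x hx1 hx2
      simp only [mem_setOf_eq] at hx1 hx2
      linarith)
  have hΩcc : IsCompact (closure Ω) := hΩb.isCompact_closure
  -- bound on the gradient of ξ on the closure of Ω
  obtain ⟨x₀, -, hx₀'⟩ := hΩcc.exists_isMaxOn (hΩn.mono subset_closure)
    ((continuous_finset_sum _ fun i _ =>
      ((((hξsm.fderiv_right (m := (⊤:ℕ∞)) (by simp)).clm_apply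
        contDiff_const).continuous).pow 2)).continuousOn)
  have hx₀ := isMaxOn_iff.mp hx₀'
  set D : ℝ := ∑ i : Fin N, (fderiv ℝ ξ x₀ (EuclideanSpace.single i 1))^2 with hDdef
  have hD0 : 0 ≤ D := Finset.sum_nonneg fun i _ => sq_nonneg _
  set K : ℝ := μ / (β/2)^2 with hKdef
  have hK0 : 0 < K := div_pos hμ0 (by positivity)
  -- the set we integrate over
  set S : Set (EuclideanSpace ℝ (Fin N)) := Ω \ {x ∈ Ω | δ x < β} with hSdef
  have hSsub : ∀ x ∈ S, x ∈ Ω ∧ β ≤ δ x := by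
    intro x hx
    obtain ⟨h1, h2⟩ := hx
    refine ⟨h1, ?_⟩
    by_contra h
    exact h2 ⟨h1, by linarith⟩
  have hSmeas : MeasurableSet S :=
    hΩo.measurableSet.diff
      (hΩo.measurableSet.inter (isOpen_lt hδc continuous_const).measurableSet)
  -- main per-epsilon estimate
  have hmain : ∀ ε : ℝ, 0 < ε → lam ε < -K - 1 →
      (∫ x in S, (φ ε x)^2) ≤ D / (-(lam ε) - K) := by
    intro ε hε hlamε
    set Φ : EuclideanSpace ℝ (Fin N) → ℝ := fun x => η x * φ ε x with hΦdef
    have hΦΩ : ∀ x, x ∉ Ω → Φ x = 0 := by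
      intro x hx
      simp [hΦdef, hdir ε hε x hx]
    -- global smoothness of Φ
    have hΦsm : ContDiff ℝ (⊤:ℕ∞) Φ := by
      rw [contDiff_iff_contDiffAt]
      intro x
      by_cases hx : x ∈ Ω
      · exact hηsm.contDiffAt.mul
          (((hsm ε hε).contDiffAt (hΩo.mem_nhds hx)).of_le (by exact_mod_cast le_top))
      · by_cases hx2 : x ∈ closure Ω
        · -- x is in the frontier, so η vanishes near x
          have hxf : x ∈ frontier Ω := by
            rw [hΩo.frontier_eq]; exact ⟨hx2, hx⟩
          have hδx : δ x = 0 := infDist_zero_of_mem hxf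
          have hU : {y | δ y < β/4} ∈ nhds x :=
            (isOpen_lt hδc continuous_const).mem_nhds (by simp [hδx]; positivity)
          refine contDiffAt_const (c := 0) |>.congr_of_eventuallyEq ?_
          filter_upwards [hU] with y hy
          simp [hΦdef, hη0 (le_of_lt hy)]
        · refine contDiffAt_const (c := 0) |>.congr_of_eventuallyEq ?_
          filter_upwards [isClosed_closure.isOpen_compl.mem_nhds hx2] with y hy
          exact hΦΩ y (fun h => hy (subset_closure h))
    have hΦc : HasCompactSupport Φ := by
      refine IsCompact.of_isClosed_subset hΩcc isClosed_closure ?_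
      refine closure_minimal ?_ isClosed_closure
      intro x hx
      by_contra h
      exact hx (hΦΩ x (fun hΩx => h (subset_closure hΩx)))
    -- potential
    set W : EuclideanSpace ℝ (Fin N) → ℝ := fun x => lam ε + μ / (δ x^2 + ε^2) with hWdef
    have hden : ∀ x, 0 < δ x^2 + ε^2 := fun x => by positivity
    have hWc : Continuous W := continuous_const.add
      (continuous_const.div ((hδc.pow 2).add continuous_const) (fun x => (hden x).ne'))
    -- pointwise eigen-identity for Φ
    have heqpt : ∀ x, (ξ x)^2 * Φ x * (-(lap Φ x)) = W x * ((ξ x)^2 * (Φ x)^2) := by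
      intro x
      rcases eq_or_ne (ξ x) 0 with h0 | hξx
      · simp [h0]
      rcases eq_or_ne (Φ x) 0 with h0 | hΦx
      · simp [h0]
      have hδx : β/2 < δ x := by
        by_contra h
        exact hξx (hξ0 (by simpa using le_of_not_gt h))
      have hxΩ : x ∈ Ω := by
        by_contra h
        exact hΦx (hΦΩ x h)
      have hUo : IsOpen {y | β/2 < δ y} := isOpen_lt continuous_const hδc
      have hev : Φ =ᶠ[nhds x] φ ε := by
        filter_upwards [hUo.mem_nhds hδx] with y hy
        simp [hΦdef, hη1 (le_of_lt hy)]
      have hlapeq : lap Φ x = lap (φ ε) x := by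
        unfold lap
        refine Finset.sum_congr rfl fun i _ => ?_
        have h1 : (fun y => fderiv ℝ Φ y (EuclideanSpace.single i 1))
            =ᶠ[nhds x] (fun y => fderiv ℝ (φ ε) y (EuclideanSpace.single i 1)) := by
          filter_upwards [hUo.mem_nhds hδx] with y hy
          have : Φ =ᶠ[nhds y] φ ε := by
            filter_upwards [hUo.mem_nhds hy] with z hz
            simp [hΦdef, hη1 (le_of_lt hz)]
          rw [this.fderiv_eq]
        rw [h1.fderiv_eq]
      have hΦφ : Φ x = φ ε x := hev.eq_of_nhds
      have heq0 := heig ε hε x hxΩ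
      have hlapφ : -(lap (φ ε) x) = (lam ε + μ / (δ x^2 + ε^2)) * φ ε x := by
        linear_combination heq0
      rw [hlapeq, hlapφ, hΦφ, hWdef]
      ring
    -- IBP estimate
    have hibp := ibp_core Φ ξ W hΦsm hΦc hξsm heqpt
    -- integrability of φ² on Ω
    have hφint : IntegrableOn (fun x => (φ ε x)^2) Ω volume := by
      by_contra hno
      have := hnorm ε hε
      rw [integral_undef hno] at this
      norm_num at this
    -- gradient-term bound : ∫ Φ² |∇ξ|² ≤ D
    have hgrad : (∫ x, (Φ x)^2 * ∑ i, (fderiv ℝ ξ x (EuclideanSpace.single i 1))^2) ≤ D := by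
      have hzero : ∀ x, x ∉ Ω →
          (Φ x)^2 * (∑ i, (fderiv ℝ ξ x (EuclideanSpace.single i 1))^2) = 0 := by
        intro x hx
        simp [hΦΩ x hx]
      rw [← setIntegral_eq_integral_of_forall_compl_eq_zero hzero]
      have hDint : (∫ x in Ω, D * (φ ε x)^2) = D := by
        rw [integral_const_mul, hnorm ε hε, mul_one]
      rw [← hDint]
      refine setIntegral_mono_on ?_ (hφint.const_mul D) hΩo.measurableSet ?_
      · refine Integrable.integrableOn ?_
        refine Continuous.integrable_of_hasCompactSupport ?_ ?_
        · exact (hΦsm.continuous.pow 2).mul (continuous_finset_sum _ fun i _ =>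
            ((((hξsm.fderiv_right (m := (⊤:ℕ∞)) (by simp)).clm_apply
              contDiff_const).continuous).pow 2))
        · exact (hΦc.comp_left (g := fun t : ℝ => t^2) (by norm_num)).mul_right
      · intro x hx
        have hsum : (∑ i, (fderiv ℝ ξ x (EuclideanSpace.single i 1))^2) ≤ D :=
          hx₀ x (subset_closure hx)
        have hsum0 : 0 ≤ ∑ i : Fin N, (fderiv ℝ ξ x (EuclideanSpace.single i 1))^2 :=
          Finset.sum_nonneg fun i _ => sq_nonneg _
        have hη01 := hηI x
        have hΦle : (Φ x)^2 ≤ (φ ε x)^2 := by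
          rw [hΦdef]
          have h1 : (η x)^2 ≤ 1 := by nlinarith [hη01.1, hη01.2]
          have h2 := mul_nonneg (sub_nonneg.mpr h1) (sq_nonneg (φ ε x))
          simp only
          nlinarith [h2]
        nlinarith [sq_nonneg (Φ x)]
    -- J := ∫ ξ²Φ² and its properties
    set J : ℝ := ∫ x, (ξ x)^2 * (Φ x)^2 with hJdef
    have hJ0 : 0 ≤ J := integral_nonneg fun x => by positivity
    have hJint : Integrable (fun x => (ξ x)^2 * (Φ x)^2) volume := by
      refine Continuous.integrable_of_hasCompactSupport
        ((hξsm.continuous.pow 2).mul (hΦsm.continuous.pow 2)) ?_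
      exact ((hΦc.comp_left (g := fun t : ℝ => t^2) (by norm_num)).mul_left)
    -- step (3): ∫ W ξ²Φ² ≤ (lam ε + K) * J
    have hstep3 : (∫ x, W x * ((ξ x)^2 * (Φ x)^2)) ≤ (lam ε + K) * J := by
      rw [hJdef, ← integral_const_mul]
      refine integral_mono ?_ (hJint.const_mul _) ?_
      · refine Continuous.integrable_of_hasCompactSupport
          (hWc.mul ((hξsm.continuous.pow 2).mul (hΦsm.continuous.pow 2))) ?_
        exact ((hΦc.comp_left (g := fun t : ℝ => t^2) (by norm_num)).mul_left).mul_left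
      · intro x
        rcases eq_or_ne (ξ x) 0 with h0 | hξx
        · simp [h0]
        have hδx : β/2 < δ x := by
          by_contra h
          exact hξx (hξ0 (by simpa using le_of_not_gt h))
        have hV : μ / (δ x^2 + ε^2) ≤ K := by
          rw [hKdef]
          apply div_le_div_of_nonneg_left hμ0.le (by positivity)
          nlinarith
        have h2 : W x ≤ lam ε + K := by
          rw [hWdef]; simp only; linarith
        have h3 : 0 ≤ (ξ x)^2 * (Φ x)^2 := by positivity
        exact mul_le_mul_of_nonneg_right h2 h3
    -- step (1): ∫_S φ² ≤ J
    have hstep1 : (∫ x in S, (φ ε x)^2) ≤ J := by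
      have hcongr : (∫ x in S, (φ ε x)^2) = ∫ x in S, (ξ x)^2 * (Φ x)^2 := by
        refine setIntegral_congr_fun hSmeas fun x hx => ?_
        obtain ⟨hxΩ, hxδ⟩ := hSsub x hx
        have h1 : ξ x = 1 := hξ1 hxδ
        have h2 : η x = 1 := hη1 (by simp only [mem_setOf_eq]; linarith)
        simp [hΦdef, h1, h2]
      rw [hcongr, hJdef]
      exact setIntegral_le_integral hJint (Filter.Eventually.of_forall fun x => by positivity)
    -- combine
    have hpos : 0 < -(lam ε) - K := by linarith
    have hchain : (-(lam ε) - K) * J ≤ D := by nlinarith [hibp, hstep3, hgrad]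
    have hfin : (-(lam ε) - K) * (∫ x in S, (φ ε x)^2) ≤ D :=
      le_trans (mul_le_mul_of_nonneg_left hstep1 hpos.le) hchain
    rw [le_div_iff₀ hpos]
    linarith [hfin]
  -- conclude by squeezing
  have hup : Tendsto (fun ε => D / (-(lam ε) - K)) (nhdsWithin 0 (Set.Ioi 0)) (nhds 0) := by
    apply Tendsto.div_atTop tendsto_const_nhds
    have h1 : Tendsto (fun ε => -(lam ε)) (nhdsWithin 0 (Set.Ioi 0)) atTop :=
      tendsto_neg_atBot_atTop.comp hlam
    exact tendsto_atTop_add_const_right _ (-K) h1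
  refine tendsto_of_tendsto_of_tendsto_of_le_of_le' tendsto_const_nhds hup ?_ ?_
  · exact Filter.Eventually.of_forall fun ε => setIntegral_nonneg hSmeas fun x _ => sq_nonneg _
  · filter_upwards [self_mem_nhdsWithin, hlam.eventually (eventually_lt_atBot (-K - 1))]
      with ε hε hlamε
    exact hmain ε hε hlamε
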